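/- arXiv:1712.01480 — 7 statements merged into one kernel-verified Lean document; each statement's English description precedes it below -/
import Mathlib

section
/- Fix α ∈ C^n with 0 ≤ Re(α_ℓ) < 1 for all ℓ, and let I_α = {ℓ : α_ℓ = 0}. For any integer m, a subset J ⊆ I_α, the subspace V_n^α(m,J) of L_n spanned by monomials x^k with Σ k_ℓ = m and {ℓ ∈ I_α : k_ℓ < 0} ⊆ J is invariant under the α-twisted action of gl(n): E_{ab}·V_n^α(m,J) ⊆ V_n^α(m,J) for all a, b. -/
open Finsupp

/-- The space of Laurent polynomials `L_n = ℂ[x₁^{±1},...,xₙ^{±1}]`,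
realized as finitely supported functions from exponent vectors to ℂ.
The monomial `x^k` is `Finsupp.single k 1`. -/
abbrev Lmon (n : ℕ) : Type := (Fin n → ℤ) →₀ ℂ

/-- The α-twisted action of the matrix unit `E_{ab}` on `L_n`:
`E_{ab} · x^k = (k_b + α_b) x^{k + e_a - e_b}`. -/
noncomputable def Eab {n : ℕ} (α : Fin n → ℂ) (a b : Fin n) :
    Lmon n →ₗ[ℂ] Lmon n :=
  Finsupp.lsum ℂ (fun k => ((k b : ℂ) + α b) •
    Finsupp.lsingle (fun i => k i + (if i = a then 1 else 0) - (if i = b then 1 else 0)))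

open scoped Classical in
/-- `V_n^α(m, J)`: the span of monomials `x^k` of total degree `m` such that
`{ℓ ∈ I_α : k_ℓ < 0} ⊆ J`, where `I_α = {ℓ : α_ℓ = 0}`. -/
noncomputable def Vmod {n : ℕ} (α : Fin n → ℂ) (m : ℤ) (J : Finset (Fin n)) :
    Submodule ℂ (Lmon n) :=
  Submodule.span ℂ {f | ∃ k : Fin n → ℤ, f = Finsupp.single k (1 : ℂ) ∧
    (∑ i, k i) = m ∧ ∀ ℓ, α ℓ = 0 → k ℓ < 0 → ℓ ∈ J}

open scoped Classical in
/-- `L_n^α(m, j)`: the span of monomials `x^k` of total degree `m` with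
`|{ℓ ∈ I_α : k_ℓ < 0}| ≤ j`  (the index `j` is an integer so that `j = -1`
gives the zero module). -/
noncomputable def LmodJ {n : ℕ} (α : Fin n → ℂ) (m j : ℤ) : Submodule ℂ (Lmon n) :=
  Submodule.span ℂ {f | ∃ k : Fin n → ℤ, f = Finsupp.single k (1 : ℂ) ∧
    (∑ i, k i) = m ∧
    ((Finset.univ.filter (fun ℓ => α ℓ = 0 ∧ k ℓ < 0)).card : ℤ) ≤ j}

/-- A subspace of `L_n` is a `𝔤𝔩(n)`-submodule (equivalently a `U(𝔤𝔩(n))`-submodule)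
iff it is invariant under all the operators `E_{ab}`. -/
def glInv {n : ℕ} (α : Fin n → ℂ) (p : Submodule ℂ (Lmon n)) : Prop :=
  ∀ a b : Fin n, ∀ f ∈ p, Eab α a b f ∈ p

/-- The `U(𝔤𝔩(n))`-submodule of `L_n^α` generated by `f`: the smallest subspace
containing `f` that is invariant under all `E_{ab}`. -/
noncomputable def genMod {n : ℕ} (α : Fin n → ℂ) (f : Lmon n) : Submodule ℂ (Lmon n) :=
  sInf {p | f ∈ p ∧ glInv α p}

/-- For `α` with `0 ≤ Re α_ℓ < 1` and `J ⊆ I_α`, the subspace `V_n^α(m,J)` is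
invariant under the α-twisted action of `𝔤𝔩(n)`. -/
theorem stmt_4 (n : ℕ) (α : Fin n → ℂ)
    (hα : ∀ ℓ, 0 ≤ (α ℓ).re ∧ (α ℓ).re < 1)
    (m : ℤ) (J : Finset (Fin n)) (hJ : ∀ ℓ ∈ J, α ℓ = 0) :
    ∀ a b : Fin n, ∀ f ∈ Vmod α m J, Eab α a b f ∈ Vmod α m J := by
  intro a b f hf
  refine Submodule.span_induction ?_ (by rw [map_zero]; exact Submodule.zero_mem _)
    (fun x y _ _ hx hy => by rw [map_add]; exact Submodule.add_mem _ hx hy)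
    (fun c x _ hx => by rw [map_smul]; exact Submodule.smul_mem _ _ hx) hf
  rintro f ⟨k, rfl, hsum, hneg⟩
  have hE : Eab α a b (Finsupp.single k 1) = ((k b : ℂ) + α b) •
      Finsupp.single (fun i => k i + (if i = a then 1 else 0) - (if i = b then 1 else 0))
        (1 : ℂ) := by
    simp [Eab, Finsupp.lsum_single]
  rw [hE]
  by_cases hzero : (k b : ℂ) + α b = 0
  · rw [hzero, zero_smul]; exact Submodule.zero_mem _
  refine Submodule.smul_mem _ _ (Submodule.subset_span ⟨_, rfl, ?_, ?_⟩)
  · simp [Finset.sum_add_distrib, Finset.sum_sub_distrib, hsum]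
  · intro ℓ hαℓ hlt
    by_cases hlb : ℓ = b
    · subst hlb
      by_cases hla : ℓ = a
      · subst hla
        simp only [if_pos rfl] at hlt
        exact hneg ℓ hαℓ (by omega)
      · simp only [if_neg hla, if_pos rfl] at hlt
        rcases lt_or_ge (k ℓ) 0 with h | h
        · exact hneg ℓ hαℓ h
        · exfalso
          have : k ℓ = 0 := by omega
          rw [hαℓ, this] at hzero
          simp at hzero
    · by_cases hla : ℓ = a
      · subst hla
        simp only [if_pos rfl, if_neg hlb] at hlt
        exact hneg ℓ hαℓ (by omega)
      · simp only [if_neg hla, if_neg hlb] at hlt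
        exact hneg ℓ hαℓ (by omega)
end

section
/- Under the α-twisted gl(n) action on L_n, if x^p and x^q are distinct monomials of the same total degree m with (q^neg ∩ I_α) ⊆ (p^neg ∩ I_α), then there exists an element X of the universal enveloping algebra U(gl(n)) with X·x^p = x^q. In particular, x^q lies in the U(gl(n))-submodule generated by x^p. -/
open Finsupp

lemma Eab_single {n : ℕ} (α : Fin n → ℂ) (a b : Fin n) (k : Fin n → ℤ) :
    Eab α a b (Finsupp.single k 1) =
      ((k b : ℂ) + α b) • Finsupp.single
        (fun i => k i + (if i = a then 1 else 0) - (if i = b then 1 else 0)) (1:ℂ) := by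
  simp [Eab]

lemma coeff_ne {a : ℂ} {m : ℤ} (h0 : 0 ≤ a.re) (h1 : a.re < 1) (h : m ≠ 0 ∨ a ≠ 0) :
    (m : ℂ) + a ≠ 0 := by
  intro hc
  have ha : a = -(m:ℂ) := by linear_combination hc
  have hre : a.re = -(m:ℝ) := by rw [ha]; simp
  have hm : m = 0 := by
    rw [hre] at h0 h1
    have h3 : (-1:ℝ) < (m:ℝ) := by linarith
    have h2 : ((m:ℝ)) ≤ 0 := by linarith
    have h4 : (-1:ℤ) < m := by exact_mod_cast h3
    have h5 : m ≤ 0 := by exact_mod_cast h2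
    omega
  subst hm
  simp at ha
  rcases h with h | h
  · exact h rfl
  · exact h ha

lemma reach {n : ℕ} (α : Fin n → ℂ) (hα : ∀ ℓ, 0 ≤ (α ℓ).re ∧ (α ℓ).re < 1)
    (p q : Fin n → ℤ) (hneg : ∀ ℓ, α ℓ = 0 → q ℓ < 0 → p ℓ < 0) :
    ∀ N : ℕ, ∀ k : Fin n → ℤ, (∑ i, (k i - q i).natAbs) = N →
      (∑ i, k i) = (∑ i, q i) → (∀ i, k i ≤ max (p i) (q i)) →
      ∃ X ∈ Algebra.adjoin ℂ {T : Module.End ℂ (Lmon n) | ∃ a b, T = Eab α a b},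
        X (Finsupp.single k (1:ℂ)) = Finsupp.single q 1 := by
  intro N
  induction N using Nat.strong_induction_on with
  | _ N ih =>
    intro k hN hsum hbd
    by_cases hkq : k = q
    · exact ⟨1, Subalgebra.one_mem _, by simp [hkq]⟩
    · -- find a with k a < q a
      have hex_a : ∃ a, k a < q a := by
        by_contra h
        push_neg at h
        apply hkq
        funext i
        have := (Finset.sum_eq_sum_iff_of_le (fun i _ => h i)).mp hsum.symm
        exact (this i (Finset.mem_univ i)).symm
      have hex_b : ∃ b, q b < k b := by
        by_contra h
        push_neg at h
        apply hkq
        funext i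
        have := (Finset.sum_eq_sum_iff_of_le (fun i _ => h i)).mp hsum
        exact (this i (Finset.mem_univ i))
      obtain ⟨a, ha⟩ := hex_a
      obtain ⟨b, hb⟩ := hex_b
      have hab : a ≠ b := by intro h; rw [h] at ha; omega
      set k' : Fin n → ℤ :=
        fun i => k i + (if i = a then 1 else 0) - (if i = b then 1 else 0) with hk'
      have hk'a : k' a = k a + 1 := by simp [hk', hab]
      have hk'b : k' b = k b - 1 := by simp [hk', hab.symm]
      have hk'o : ∀ i, i ≠ a → i ≠ b → k' i = k i := by
        intro i h1 h2; simp [hk', h1, h2]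
      -- coefficient nonzero
      have hcoef : ((k b : ℂ) + α b) ≠ 0 := by
        apply coeff_ne (hα b).1 (hα b).2
        by_cases hzb : α b = 0
        · left
          intro hkb0
          have hqb : q b < 0 := by omega
          have hpb : p b < 0 := hneg b hzb hqb
          have := hbd b
          omega
        · right; exact hzb
      -- measure decreases
      have hlt : (∑ i, (k' i - q i).natAbs) < N := by
        rw [← hN]
        refine Finset.sum_lt_sum (fun i _ => ?_) ⟨a, Finset.mem_univ a, by rw [hk'a]; omega⟩
        by_cases h1 : i = a
        · rw [h1, hk'a]; have := ha; omega
        · by_cases h2 : i = b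
          · rw [h2, hk'b]; have := hb; omega
          · rw [hk'o i h1 h2]
      have hsum' : (∑ i, k' i) = ∑ i, q i := by
        rw [← hsum]
        have : ∀ i, k' i = k i + ((if i = a then 1 else 0) - (if i = b then 1 else 0)) := by
          intro i; simp [hk']; ring
        rw [Finset.sum_congr rfl (fun i _ => this i), Finset.sum_add_distrib]
        simp [Finset.sum_sub_distrib]
      have hbd' : ∀ i, k' i ≤ max (p i) (q i) := by
        intro i
        by_cases h1 : i = a
        · rw [h1, hk'a]; have := le_max_right (p a) (q a); omega
        · by_cases h2 : i = b
          · rw [h2, hk'b]; have := hbd b; omega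
          · rw [hk'o i h1 h2]; exact hbd i
      obtain ⟨X', hX'mem, hX'⟩ := ih _ hlt k' rfl hsum' hbd'
      refine ⟨((k b : ℂ) + α b)⁻¹ • (X' * Eab α a b), ?_, ?_⟩
      · exact Subalgebra.smul_mem _ (mul_mem hX'mem
          (Algebra.subset_adjoin ⟨a, b, rfl⟩)) _
      · have hE : Eab α a b (Finsupp.single k 1)
            = ((k b : ℂ) + α b) • Finsupp.single k' (1:ℂ) := Eab_single α a b k
        rw [LinearMap.smul_apply, Module.End.mul_apply, hE, map_smul, hX',
          smul_smul, inv_mul_cancel₀ hcoef, one_smul]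

lemma adjoin_preserves {n : ℕ} (α : Fin n → ℂ) (p' : Submodule ℂ (Lmon n))
    (hinv : ∀ a b : Fin n, ∀ f ∈ p', Eab α a b f ∈ p')
    {X : Module.End ℂ (Lmon n)}
    (hX : X ∈ Algebra.adjoin ℂ {T : Module.End ℂ (Lmon n) | ∃ a b, T = Eab α a b}) :
    ∀ f ∈ p', X f ∈ p' := by
  induction hX using Algebra.adjoin_induction with
  | mem T hT =>
    obtain ⟨a, b, rfl⟩ := hT
    exact hinv a b
  | algebraMap r =>
    intro f hf
    simpa [Module.algebraMap_end_apply] using p'.smul_mem r hf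
  | add x y hx hy ihx ihy =>
    intro f hf
    simpa [LinearMap.add_apply] using p'.add_mem (ihx f hf) (ihy f hf)
  | mul x y hx hy ihx ihy =>
    intro f hf
    simpa [Module.End.mul_apply] using ihx _ (ihy f hf)

/-- If `x^p ≠ x^q` have the same total degree and
`(q^neg ∩ I_α) ⊆ (p^neg ∩ I_α)`, then some element `X` of the algebra
generated by the operators `E_{ab}` (i.e. of the image of `U(𝔤𝔩(n))`)
satisfies `X · x^p = x^q`; in particular `x^q` lies in the
`U(𝔤𝔩(n))`-submodule generated by `x^p`. -/
theorem stmt_6 (n : ℕ) (α : Fin n → ℂ)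
    (hα : ∀ ℓ, 0 ≤ (α ℓ).re ∧ (α ℓ).re < 1)
    (p q : Fin n → ℤ) (hne : p ≠ q)
    (hdeg : (∑ i, p i) = (∑ i, q i))
    (hneg : ∀ ℓ, α ℓ = 0 → q ℓ < 0 → p ℓ < 0) :
    (∃ X ∈ Algebra.adjoin ℂ {T : Module.End ℂ (Lmon n) | ∃ a b, T = Eab α a b},
       X (Finsupp.single p (1 : ℂ)) = Finsupp.single q (1 : ℂ)) ∧
    Finsupp.single q (1 : ℂ) ∈ genMod α (Finsupp.single p (1 : ℂ)) := by
  obtain ⟨X, hXmem, hX⟩ := reach α hα p q hneg _ p rfl hdeg (fun i => le_max_left _ _)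
  refine ⟨⟨X, hXmem, hX⟩, ?_⟩
  unfold genMod glInv
  rw [Submodule.mem_sInf]
  rintro p' ⟨hp, hinv⟩
  rw [← hX]
  exact adjoin_preserves α p' hinv hXmem _ hp
end

section
/- If α ≠ 0 (with 0 ≤ Re(α_ℓ) < 1 for all ℓ) and J = {ℓ_1,...,ℓ_j} ⊆ I_α, then V_n^α(m,J) is a cyclic U(gl(n))-module generated by the monomial x_{ℓ_1}^{-1}···x_{ℓ_j}^{-1} x_t^{m+j} for any t ∉ I_α. -/
open Finsupp

lemma coeff_ne_s8 {n : ℕ} (α : Fin n → ℂ) (hα : ∀ ℓ, 0 ≤ (α ℓ).re ∧ (α ℓ).re < 1)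
    (b : Fin n) (kb : ℤ) (h : ¬ (α b = 0 ∧ kb = 0)) : ((kb : ℂ) + α b) ≠ 0 := by
  intro he
  have hab : α b = -(kb : ℂ) := by linear_combination he
  have hre : (α b).re = (-kb : ℤ) := by rw [hab]; simp
  obtain ⟨h0, h1⟩ := hα b
  rw [hre] at h0 h1
  have h0' : (0:ℤ) ≤ -kb := by exact_mod_cast h0
  have h1' : (-kb:ℤ) < 1 := by exact_mod_cast h1
  have : kb = 0 := by omega
  exact h ⟨by rw [hab, this]; simp, this⟩
lemma mem_genMod_self {n : ℕ} (α : Fin n → ℂ) (f : Lmon n) : f ∈ genMod α f := by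
  rw [genMod, Submodule.mem_sInf]; exact fun p hp => hp.1

lemma genMod_inv {n : ℕ} (α : Fin n → ℂ) (f : Lmon n) : glInv α (genMod α f) := by
  intro a b g hg
  rw [genMod, Submodule.mem_sInf] at hg ⊢
  exact fun p hp => hp.2 a b g (hg p hp)

lemma genMod_le {n : ℕ} (α : Fin n → ℂ) (f : Lmon n) {p : Submodule ℂ (Lmon n)}
    (h1 : f ∈ p) (h2 : glInv α p) : genMod α f ≤ p :=
  sInf_le ⟨h1, h2⟩

lemma move {n : ℕ} (α : Fin n → ℂ) (hα : ∀ ℓ, 0 ≤ (α ℓ).re ∧ (α ℓ).re < 1)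
    (g : Lmon n) (k : Fin n → ℤ) (a b : Fin n)
    (hk : Finsupp.single k (1:ℂ) ∈ genMod α g) (hne : ¬ (α b = 0 ∧ k b = 0)) :
    Finsupp.single (fun i => k i + (if i = a then 1 else 0) - (if i = b then 1 else 0)) (1:ℂ)
      ∈ genMod α g := by
  have h := genMod_inv α g a b _ hk
  rw [Eab_single] at h
  have hc := coeff_ne_s8 α hα b (k b) hne
  have h2 := Submodule.smul_mem _ ((k b : ℂ) + α b)⁻¹ h
  rwa [smul_smul, inv_mul_cancel₀ hc, one_smul] at h2
lemma pumpA {n : ℕ} (α : Fin n → ℂ) (hα : ∀ ℓ, 0 ≤ (α ℓ).re ∧ (α ℓ).re < 1)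
    (g : Lmon n) (t : Fin n) (ht : α t ≠ 0) (a : Fin n) (k : Fin n → ℤ)
    (hk : Finsupp.single k (1:ℂ) ∈ genMod α g) (c : ℕ) :
    Finsupp.single (fun i => k i + (if i = a then (c:ℤ) else 0) - (if i = t then (c:ℤ) else 0))
      (1:ℂ) ∈ genMod α g := by
  induction c with
  | zero => convert hk using 2; funext i; simp
  | succ c ih =>
      have h := move α hα g _ a t ih (by simp [ht])
      convert h using 2
      funext i
      rcases eq_or_ne i a with hia | hia <;> rcases eq_or_ne i t with hit | hit <;>
        subst_vars <;> simp_all <;> push_cast <;> ring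

lemma pumpB {n : ℕ} (α : Fin n → ℂ) (hα : ∀ ℓ, 0 ≤ (α ℓ).re ∧ (α ℓ).re < 1)
    (g : Lmon n) (t : Fin n) (a : Fin n) (hat : a ≠ t) (k : Fin n → ℤ)
    (hyp : α a ≠ 0 ∨ k a < 0)
    (hk : Finsupp.single k (1:ℂ) ∈ genMod α g) (c : ℕ) :
    Finsupp.single (fun i => k i - (if i = a then (c:ℤ) else 0) + (if i = t then (c:ℤ) else 0))
      (1:ℂ) ∈ genMod α g := by
  induction c with
  | zero => convert hk using 2; funext i; simp
  | succ c ih =>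
      have hne : ¬ (α a = 0 ∧ (fun i => k i - (if i = a then (c:ℤ) else 0) + (if i = t then (c:ℤ) else 0)) a = 0) := by
        simp only [if_pos rfl, if_neg hat]
        rcases hyp with h | h
        · exact fun hh => h hh.1
        · intro hh; omega
      have h := move α hα g _ t a ih hne
      convert h using 2
      funext i
      rcases eq_or_ne i a with hia | hia <;> rcases eq_or_ne i t with hit | hit <;>
        subst_vars <;> simp_all <;> push_cast <;> ring
lemma reach_s8 {n : ℕ} (α : Fin n → ℂ) (hα : ∀ ℓ, 0 ≤ (α ℓ).re ∧ (α ℓ).re < 1)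
    (g : Lmon n) (t : Fin n) (ht : α t ≠ 0) (k₀ k : Fin n → ℤ)
    (hsum : ∑ i, k i = ∑ i, k₀ i)
    (hadm : ∀ i, i ≠ t → α i = 0 → k i < k₀ i → k₀ i < 0)
    (hk₀ : Finsupp.single k₀ (1:ℂ) ∈ genMod α g) :
    Finsupp.single k (1:ℂ) ∈ genMod α g := by
  classical
  set ks : Finset (Fin n) → Fin n → ℤ := fun s i =>
    if i = t then k₀ t + ∑ j ∈ s, (k₀ j - k j) else if i ∈ s then k i else k₀ i with hks
  have key : ∀ s : Finset (Fin n), t ∉ s → Finsupp.single (ks s) (1:ℂ) ∈ genMod α g := by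
    intro s
    induction s using Finset.induction_on with
    | empty =>
        intro _
        convert hk₀ using 2
        funext i
        by_cases hit : i = t <;> simp [hks, hit]
    | @insert a s ha ih =>
        intro hts
        have hat : a ≠ t := fun h => hts (h ▸ Finset.mem_insert_self a s)
        have hts' : t ∉ s := fun h => hts (Finset.mem_insert_of_mem h)
        have ihs := ih hts'
        have hsa : ks s a = k₀ a := by simp [hks, hat, ha]
        rcases le_or_gt (k₀ a) (k a) with hd | hd
        · -- increase a by c := k a - k₀ a, pumpA
          have h := pumpA α hα g t ht a (ks s) ihs (k a - k₀ a).toNat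
          convert h using 2
          funext i
          by_cases hia : i = a <;> by_cases hit : i = t <;>
            subst_vars <;>
            simp_all [hks, Finset.sum_insert ha, Finset.mem_insert] <;> omega
        · -- decrease a, pumpB
          have hyp : α a ≠ 0 ∨ ks s a < 0 := by
            by_cases hz : α a = 0
            · right; rw [hsa]; exact hadm a hat hz hd
            · left; exact hz
          have h := pumpB α hα g t a hat (ks s) hyp ihs (k₀ a - k a).toNat
          convert h using 2
          funext i
          by_cases hia : i = a <;> by_cases hit : i = t <;>
            subst_vars <;>
            simp_all [hks, Finset.sum_insert ha, Finset.mem_insert] <;> omega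
  have h := key (Finset.univ.erase t) (Finset.notMem_erase t _)
  convert h using 2
  funext i
  by_cases hit : i = t
  · rw [hit]
    simp only [hks, if_pos rfl]
    have : ∑ j ∈ Finset.univ.erase t, (k₀ j - k j)
        = (∑ j, (k₀ j - k j)) - (k₀ t - k t) := by
      rw [← Finset.sum_erase_add _ _ (Finset.mem_univ t)]; ring
    rw [this, Finset.sum_sub_distrib, hsum]
    ring
  · simp [hks, hit, Finset.mem_erase]

/-- For `α ≠ 0` and `J ⊆ I_α`, `V_n^α(m,J)` is cyclic, generated by
`x_{ℓ₁}^{-1} ⋯ x_{ℓⱼ}^{-1} x_t^{m+j}` for any `t ∉ I_α`. -/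
theorem stmt_8 (n : ℕ) (α : Fin n → ℂ)
    (hα : ∀ ℓ, 0 ≤ (α ℓ).re ∧ (α ℓ).re < 1) (hα0 : α ≠ 0)
    (m : ℤ) (J : Finset (Fin n)) (hJ : ∀ ℓ ∈ J, α ℓ = 0)
    (t : Fin n) (ht : α t ≠ 0) :
    genMod α (Finsupp.single
      (fun i => if i ∈ J then (-1 : ℤ) else if i = t then m + J.card else 0) (1 : ℂ)) =
      Vmod α m J := by
  classical
  set k₀ : Fin n → ℤ := fun i => if i ∈ J then (-1 : ℤ) else if i = t then m + J.card else 0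
    with hk₀def
  have htJ : t ∉ J := fun h => ht (hJ t h)
  have hsum0 : ∑ i, k₀ i = m := by
    have hrw : ∀ i, k₀ i =
        (if i ∈ J then (-1 : ℤ) else 0) + (if i = t then m + J.card else 0) := by
      intro i
      by_cases hiJ : i ∈ J
      · have : i ≠ t := fun h => htJ (h ▸ hiJ)
        simp [hk₀def, hiJ, this]
      · simp [hk₀def, hiJ]
    rw [Finset.sum_congr rfl (fun i _ => hrw i), Finset.sum_add_distrib]
    rw [Finset.sum_ite_mem, Finset.univ_inter, Finset.sum_const, Finset.sum_ite_eq']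
    simp
  have hadm0 : ∀ ℓ, α ℓ = 0 → k₀ ℓ < 0 → ℓ ∈ J := by
    intro ℓ hℓ hlt
    by_contra hℓJ
    by_cases hℓt : ℓ = t
    · exact ht (hℓt ▸ hℓ)
    · simp [hk₀def, hℓJ, hℓt] at hlt
  apply le_antisymm
  · -- genMod ≤ Vmod
    apply genMod_le
    · exact Submodule.subset_span ⟨k₀, rfl, hsum0, hadm0⟩
    · -- glInv α (Vmod α m J)
      intro a b f hf
      refine Submodule.span_induction (fun x hx => ?_) (by simp) (fun x y _ _ hx hy => ?_)
        (fun c x _ hx => ?_) hf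
      · obtain ⟨k, rfl, hks, hka⟩ := hx
        rw [Eab_single]
        by_cases hz : α b = 0 ∧ k b = 0
        · rw [hz.1, hz.2]; simp
        · apply Submodule.smul_mem
          apply Submodule.subset_span
          refine ⟨_, rfl, ?_, ?_⟩
          · rw [Finset.sum_sub_distrib, Finset.sum_add_distrib]
            rw [Finset.sum_ite_eq', Finset.sum_ite_eq']
            simp [hks]
          · intro ℓ hαℓ hlt
            apply hka ℓ hαℓ
            have hc : ℓ = b → k ℓ ≠ 0 := by rintro rfl h; exact hz ⟨hαℓ, h⟩
            by_cases h1 : ℓ = a <;> by_cases h2 : ℓ = b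
            · rw [if_pos h1, if_pos h2] at hlt; omega
            · rw [if_pos h1, if_neg h2] at hlt; omega
            · rw [if_neg h1, if_pos h2] at hlt; have := hc h2; omega
            · rw [if_neg h1, if_neg h2] at hlt; omega
      · rw [map_add]; exact Submodule.add_mem _ hx hy
      · rw [map_smul]; exact Submodule.smul_mem _ c hx
  · -- Vmod ≤ genMod
    rw [Vmod]
    rw [Submodule.span_le]
    rintro f ⟨k, rfl, hks, hka⟩
    refine reach_s8 α hα _ t ht k₀ k (by rw [hks, hsum0]) ?_ (mem_genMod_self α _)
    intro i hit hαi hki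
    by_cases hiJ : i ∈ J
    · simp [hk₀def, hiJ]
    · exfalso
      have h0 : k₀ i = 0 := by simp [hk₀def, hiJ, hit]
      exact hiJ (hka i hαi (by omega))
end

section
/- For α = 0 and m ≥ 1, the gl(n)-module L_n^0(−m,1) decomposes as the direct sum of the n simple submodules V_n^0(−m,{ℓ}) for ℓ = 1,...,n: L_n^0(−m,1) = ⊕_{ℓ=1}^n V_n^0(−m,{ℓ}). -/
open Finsupp

/-! Since the degree `-m` is negative, every monomial of `L_n^0(-m,1)` has exactly one negative
exponent, so the monomial bases of the `V_n^0(-m,{ℓ})` partition that of `L_n^0(-m,1)`.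
For simplicity: the `E_bb` act diagonally on monomials, so a nonzero invariant subspace contains
a monomial; inside `V_n^0(-m,{ℓ})` the operators `E_{ℓi}` and `E_{iℓ}` link every monomial to
`x_ℓ^{-m}` with nonzero coefficients. -/

theorem Finsupp.iSupIndep_supported {α M R ι : Type*} [Semiring R] [AddCommMonoid M] [Module R M]
    {s : ι → Set α} (h : Pairwise fun i j => Disjoint (s i) (s j)) :
    iSupIndep fun i => supported M R (s i) := by
  refine iSupIndep_def.mpr fun i => Disjoint.mono_right
    (iSup₂_le fun j hj => supported_mono (Set.subset_biUnion_of_mem (u := s) hj)) ?_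
  exact disjoint_supported_supported <| Set.disjoint_iUnion₂_right.mpr fun _ hj => h (Ne.symm hj)

theorem span_setOf_single_eq_supported {n : ℕ} (P : (Fin n → ℤ) → Prop) :
    Submodule.span ℂ {f : Lmon n | ∃ k, f = single k 1 ∧ P k} = supported ℂ ℂ {k | P k} := by
  rw [supported_eq_span_single]
  congr 1
  ext f
  exact ⟨fun ⟨k, hf, hk⟩ => ⟨k, hk, hf.symm⟩, fun ⟨k, hk, hf⟩ => ⟨k, hf.symm, hk⟩⟩

section Action

variable {n : ℕ} (α : Fin n → ℂ)

def shiftExp (a b : Fin n) (k : Fin n → ℤ) : Fin n → ℤ :=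
  fun i => k i + (if i = a then 1 else 0) - (if i = b then 1 else 0)

@[simp]
theorem shiftExp_self (b : Fin n) (k : Fin n → ℤ) : shiftExp b b k = k := by
  funext i; simp [shiftExp]

theorem shiftExp_shiftExp (a b : Fin n) (k : Fin n → ℤ) :
    shiftExp b a (shiftExp a b k) = k := by
  funext i; simp only [shiftExp]; ring

theorem shiftExp_apply_left {a b : Fin n} (h : b ≠ a) (k : Fin n → ℤ) :
    shiftExp a b k a = k a + 1 := by
  simp [shiftExp, h.symm]

theorem sum_shiftExp (a b : Fin n) (k : Fin n → ℤ) : ∑ i, shiftExp a b k i = ∑ i, k i := by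
  simp [shiftExp, Finset.sum_add_distrib, Finset.sum_sub_distrib]

theorem Eab_single_s13 (a b : Fin n) (k : Fin n → ℤ) (c : ℂ) :
    Eab α a b (single k c) = (((k b : ℂ) + α b) * c) • single (shiftExp a b k) 1 := by
  rw [Eab, lsum_single, LinearMap.smul_apply, lsingle_apply, ← smul_single_one, smul_smul]
  rfl

theorem Eab_self_apply (b : Fin n) (f : Lmon n) (k : Fin n → ℤ) :
    Eab α b b f k = ((k b : ℂ) + α b) * f k := by
  induction f using Finsupp.induction_linear with
  | zero => simp
  | add f g hf hg => rw [map_add, Finsupp.add_apply, hf, hg, Finsupp.add_apply, mul_add]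
  | single k' c =>
    rw [Eab_single_s13, shiftExp_self, smul_single_one, single_apply, single_apply]
    split_ifs with h
    · rw [h]
    · rw [mul_zero]

variable {α} {p : Submodule ℂ (Lmon n)}

theorem single_shiftExp_mem (hp : glInv α p) {k : Fin n → ℤ} (hk : single k 1 ∈ p)
    (a : Fin n) {b : Fin n} (hb : (k b : ℂ) + α b ≠ 0) : single (shiftExp a b k) 1 ∈ p := by
  have h := p.smul_mem ((k b : ℂ) + α b)⁻¹ (hp a b _ hk)
  rwa [Eab_single_s13, mul_one, smul_smul, inv_mul_cancel₀ hb, one_smul] at h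

/-- `E_bb` multiplies `x^k` by `k_b + α_b`, so `E_bb - (k₂ b + α_b)` kills the `x^{k₂}` term of
`f` and keeps every term `x^k` with `k b ≠ k₂ b`. -/
theorem exists_ne_zero_support_ssubset_of_glInv (hp : glInv α p) {f : Lmon n} (hf : f ∈ p)
    (hcard : 1 < f.support.card) : ∃ g ∈ p, g ≠ 0 ∧ g.support ⊂ f.support := by
  obtain ⟨k₁, hk₁, k₂, hk₂, hne⟩ := Finset.one_lt_card.mp hcard
  obtain ⟨b, hb⟩ := Function.ne_iff.mp hne
  set g := Eab α b b f - ((k₂ b : ℂ) + α b) • f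
  have hg : ∀ k, g k = ((k b : ℂ) - k₂ b) * f k := fun k => by
    simp only [g, Finsupp.sub_apply, Finsupp.smul_apply, Eab_self_apply, smul_eq_mul]; ring
  have hsub : g.support ⊆ f.support := fun k hk => by
    rw [mem_support_iff, hg] at hk
    exact mem_support_iff.mpr (right_ne_zero_of_mul hk)
  have hk₁g : k₁ ∈ g.support := by
    rw [mem_support_iff, hg]
    exact mul_ne_zero (sub_ne_zero.mpr (by exact_mod_cast hb)) (mem_support_iff.mp hk₁)
  have hk₂g : k₂ ∉ g.support := by simp [hg]
  exact ⟨g, p.sub_mem (hp b b f hf) (p.smul_mem _ hf), support_nonempty_iff.mp ⟨k₁, hk₁g⟩,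
    Finset.ssubset_iff_subset_ne.mpr ⟨hsub, fun h => hk₂g (h ▸ hk₂)⟩⟩

theorem exists_single_mem_of_glInv (hp : glInv α p) {f : Lmon n} (hf : f ∈ p) (hf0 : f ≠ 0) :
    ∃ k ∈ f.support, single k 1 ∈ p := by
  induction hN : f.support.card using Nat.strong_induction_on generalizing f with
  | _ N ih =>
  rcases lt_or_ge 1 f.support.card with hcard | hcard
  · obtain ⟨g, hg, hg0, hgf⟩ := exists_ne_zero_support_ssubset_of_glInv hp hf hcard
    obtain ⟨k, hk, hkp⟩ := ih _ (hN ▸ Finset.card_lt_card hgf) hg hg0 rfl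
    exact ⟨k, hgf.subset hk, hkp⟩
  · have hone : f.support.card = 1 :=
      le_antisymm hcard (Finset.card_pos.mpr (support_nonempty_iff.mpr hf0))
    obtain ⟨k, hk0, hfk⟩ := card_support_eq_one.mp hone
    refine ⟨k, mem_support_iff.mpr hk0, ?_⟩
    have h := p.smul_mem (f k)⁻¹ hf
    rwa [hfk, smul_single, single_eq_same, smul_eq_mul, inv_mul_cancel₀ hk0] at h

end Action

section Exponents

variable {n : ℕ} {d : ℤ} {ℓ : Fin n} {k : Fin n → ℤ}

def expsNonnegOff (n : ℕ) (d : ℤ) (ℓ : Fin n) : Set (Fin n → ℤ) :=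
  {k | ∑ i, k i = d ∧ ∀ i, k i < 0 → i = ℓ}

theorem Vmod_zero_singleton (n : ℕ) (d : ℤ) (ℓ : Fin n) :
    Vmod (0 : Fin n → ℂ) d {ℓ} = supported ℂ ℂ (expsNonnegOff n d ℓ) := by
  rw [Vmod, span_setOf_single_eq_supported]
  congr 1
  ext k
  simp [expsNonnegOff]

theorem exists_neg_of_sum_neg (hd : ∑ i, k i < 0) : ∃ i, k i < 0 := by
  by_contra! h
  exact (Finset.sum_nonneg fun i _ => h i).not_gt hd

theorem LmodJ_zero_one (hd : d < 0) :
    LmodJ (0 : Fin n → ℂ) d 1 = supported ℂ ℂ (⋃ ℓ, expsNonnegOff n d ℓ) := by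
  rw [LmodJ, span_setOf_single_eq_supported]
  congr 1
  ext k
  simp only [Pi.zero_apply, true_and, Nat.cast_le_one, Finset.card_le_one, Finset.mem_filter,
    Finset.mem_univ, Set.mem_ofPred_eq, Set.mem_iUnion, expsNonnegOff]
  constructor
  · rintro ⟨hk, hneg⟩
    obtain ⟨ℓ, hℓ⟩ := exists_neg_of_sum_neg (hk ▸ hd)
    exact ⟨ℓ, hk, fun i hi => hneg i hi ℓ hℓ⟩
  · rintro ⟨ℓ, hk, hneg⟩
    exact ⟨hk, fun i hi j hj => (hneg i hi).trans (hneg j hj).symm⟩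

theorem pairwise_disjoint_expsNonnegOff (hd : d < 0) :
    Pairwise fun ℓ ℓ' => Disjoint (expsNonnegOff n d ℓ) (expsNonnegOff n d ℓ') := fun ℓ ℓ' hne =>
  Set.disjoint_left.mpr fun k ⟨hk, hneg⟩ ⟨_, hneg'⟩ => by
    obtain ⟨i, hi⟩ := exists_neg_of_sum_neg (hk ▸ hd)
    exact hne ((hneg i hi).symm.trans (hneg' i hi))

theorem nonneg_of_mem_expsNonnegOff (hk : k ∈ expsNonnegOff n d ℓ) {i : Fin n} (hi : i ≠ ℓ) :
    0 ≤ k i :=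
  not_lt.mp fun h => hi (hk.2 i h)

theorem sum_le_of_mem_expsNonnegOff (hk : k ∈ expsNonnegOff n d ℓ) {s : Finset (Fin n)}
    (hℓ : ℓ ∈ s) : ∑ i ∈ s, k i ≤ d :=
  hk.1 ▸ Finset.sum_le_sum_of_subset_of_nonneg (Finset.subset_univ s)
    fun _ _ hi => nonneg_of_mem_expsNonnegOff hk (ne_of_mem_of_not_mem hℓ hi).symm

theorem add_le_of_mem_expsNonnegOff (hk : k ∈ expsNonnegOff n d ℓ) {i : Fin n} (hi : i ≠ ℓ) :
    k ℓ + k i ≤ d := by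
  simpa [Finset.sum_pair hi.symm] using
    sum_le_of_mem_expsNonnegOff hk (Finset.mem_insert_self ℓ {i})

theorem eq_single_of_mem_expsNonnegOff (hk : k ∈ expsNonnegOff n d ℓ) (hkℓ : k ℓ = d) :
    k = Pi.single ℓ d := by
  funext i
  rcases eq_or_ne i ℓ with rfl | hi
  · simp [hkℓ]
  · have := add_le_of_mem_expsNonnegOff hk hi
    have := nonneg_of_mem_expsNonnegOff hk hi
    simp only [Pi.single_apply, hi, if_false]
    omega

theorem exists_pos_of_mem_expsNonnegOff (hk : k ∈ expsNonnegOff n d ℓ) (hkℓ : k ℓ ≠ d) :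
    ∃ i ≠ ℓ, 0 < k i := by
  by_contra! h
  refine hkℓ (hk.1 ▸ (Finset.sum_eq_single ℓ (fun i _ hi => ?_) (by simp)).symm)
  exact le_antisymm (h i hi) (nonneg_of_mem_expsNonnegOff hk hi)

theorem shiftExp_mem_expsNonnegOff (hk : k ∈ expsNonnegOff n d ℓ) {i : Fin n} (hki : 0 < k i) :
    shiftExp ℓ i k ∈ expsNonnegOff n d ℓ := by
  refine ⟨(sum_shiftExp ℓ i k).trans hk.1, fun j hj => ?_⟩
  by_contra hjℓ
  have := nonneg_of_mem_expsNonnegOff hk hjℓ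
  rcases eq_or_ne j i with rfl | hji
  · simp only [shiftExp, ↓reduceIte, add_zero, hjℓ] at hj
    omega
  · simp only [shiftExp, if_neg hjℓ, if_neg hji, add_zero, sub_zero] at hj
    omega

end Exponents

section Simplicity

variable {n : ℕ} {d : ℤ} {ℓ : Fin n} {p : Submodule ℂ (Lmon n)}

/-- Walking from `x^k` towards `x_ℓ^d` by `E_{ℓ i}` (for `k_i > 0`) and back by `E_{i ℓ}`:
both coefficients are nonzero, the second because the exponent of `x_ℓ` stays `< 0`. -/
theorem single_mem_iff_of_mem_expsNonnegOff (hd : d < 0) (hp : glInv 0 p) {k : Fin n → ℤ}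
    (hk : k ∈ expsNonnegOff n d ℓ) : single k 1 ∈ p ↔ single (Pi.single ℓ d) 1 ∈ p := by
  obtain ⟨N, hN⟩ : ∃ N : ℕ, d - k ℓ = N :=
    Int.eq_ofNat_of_zero_le (sub_nonneg.mpr (by
      simpa using sum_le_of_mem_expsNonnegOff hk (Finset.mem_singleton_self ℓ)))
  induction N generalizing k with
  | zero => rw [eq_single_of_mem_expsNonnegOff hk (by omega)]
  | succ N ih =>
    obtain ⟨i, hi, hki⟩ := exists_pos_of_mem_expsNonnegOff hk (by omega)
    have hk' := shiftExp_mem_expsNonnegOff hk hki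
    have hk'ℓ := shiftExp_apply_left hi k
    have := add_le_of_mem_expsNonnegOff hk hi
    rw [← ih hk' (by omega)]
    refine ⟨fun h => single_shiftExp_mem hp h ℓ ?_, fun h => ?_⟩
    · rw [Pi.zero_apply, add_zero, Int.cast_ne_zero]
      omega
    · have h' := single_shiftExp_mem hp h i (b := ℓ) (by
        rw [Pi.zero_apply, add_zero, Int.cast_ne_zero]
        omega)
      rwa [shiftExp_shiftExp] at h'

theorem Vmod_zero_singleton_le_of_glInv (hd : d < 0) (hp : glInv 0 p) {f : Lmon n}
    (hf : f ∈ p) (hfV : f ∈ Vmod (0 : Fin n → ℂ) d {ℓ}) (hf0 : f ≠ 0) :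
    Vmod (0 : Fin n → ℂ) d {ℓ} ≤ p := by
  rw [Vmod_zero_singleton] at hfV ⊢
  obtain ⟨k, hk, hkp⟩ := exists_single_mem_of_glInv hp hf hf0
  have hbase := (single_mem_iff_of_mem_expsNonnegOff hd hp (hfV hk)).mp hkp
  rw [supported_eq_span_single, Submodule.span_le]
  rintro _ ⟨k', hk', rfl⟩
  exact (single_mem_iff_of_mem_expsNonnegOff hd hp hk').mpr hbase

end Simplicity

/-- For `m ≥ 1`, `L_n^0(−m,1) = ⊕_{ℓ=1}^n V_n^0(−m,{ℓ})`. -/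
theorem stmt_13 (n : ℕ) (m : ℤ) (hm : 1 ≤ m) :
    LmodJ (0 : Fin n → ℂ) (-m) 1 = (⨆ ℓ : Fin n, Vmod (0 : Fin n → ℂ) (-m) {ℓ}) ∧
    iSupIndep (fun ℓ : Fin n => Vmod (0 : Fin n → ℂ) (-m) {ℓ}) ∧
    ∀ ℓ : Fin n, ∀ p : Submodule ℂ (Lmon n), glInv (0 : Fin n → ℂ) p →
      p ≤ Vmod (0 : Fin n → ℂ) (-m) {ℓ} → p ≠ ⊥ →
      p = Vmod (0 : Fin n → ℂ) (-m) {ℓ} := by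
  have hd : -m < 0 := by omega
  refine ⟨?_, ?_, fun ℓ p hp hle hne => ?_⟩
  · simp only [LmodJ_zero_one hd, Vmod_zero_singleton, supported_iUnion]
  · simpa only [Vmod_zero_singleton] using
      iSupIndep_supported (pairwise_disjoint_expsNonnegOff hd)
  · obtain ⟨f, hf, hf0⟩ := Submodule.exists_mem_ne_zero_of_ne_bot hne
    exact le_antisymm hle (Vmod_zero_singleton_le_of_glInv hd hp hf (hle hf) hf0)
end

section
/- Let α ∈ C^n with α_ℓ = c ≠ 0 for one fixed index ℓ and α_{ℓ'} = 0 for all ℓ' ≠ ℓ, and let J = {1,2,...,ℓ−1}. Then for every m ∈ Z, the vector v = x_1^{-1} x_2^{-1} ··· x_{ℓ−1}^{-1} x_ℓ^{m+ℓ−1} satisfies, modulo L_n^α(m, ℓ−2): E_{ab}·v ∈ L_n^α(m,ℓ−2) for all 1 ≤ a < b ≤ n, and E_{aa}·v = λ_a v where λ = (−1,...,−1, m+ℓ−1+c, 0,...,0) (with −1 in the first ℓ−1 coordinates and m+ℓ−1+c in coordinate ℓ). Hence the image of v in W_n^α(m,J) is a highest weight vector of weight λ. -/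
open Finsupp

lemma eab_single {n : ℕ} (α : Fin n → ℂ) (a b : Fin n) (k : Fin n → ℤ) :
    Eab α a b (Finsupp.single k 1) =
      ((k b : ℂ) + α b) • Finsupp.single
        (fun i => k i + (if i = a then 1 else 0) - (if i = b then 1 else 0)) 1 := by
  simp [Eab, Finsupp.lsum_single]

lemma aux_card_lt {n : ℕ} (ℓ : Fin n) :
    (Finset.univ.filter (fun i : Fin n => i < ℓ)).card = ℓ := by
  have : (Finset.univ.filter (fun i : Fin n => i < ℓ)) = Finset.Iio ℓ := by
    ext i; simp
  rw [this, Fin.card_Iio]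

lemma aux_sum_k {n : ℕ} (ℓ : Fin n) (m : ℤ) :
    (∑ i : Fin n, (if i < ℓ then (-1 : ℤ) else if i = ℓ then m + (ℓ : ℕ) else 0)) = m := by
  classical
  have h : ∀ i : Fin n, (if i < ℓ then (-1 : ℤ) else if i = ℓ then m + (ℓ : ℕ) else 0)
      = (if i = ℓ then m + (ℓ : ℕ) else 0) + (if i < ℓ then (-1:ℤ) else 0) := by
    intro i
    rcases lt_trichotomy i ℓ with h|h|h
    · simp [h, h.ne]
    · simp [h]
    · simp [h.ne', not_lt.mpr h.le]
  rw [Finset.sum_congr rfl (fun i _ => h i), Finset.sum_add_distrib]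
  rw [Finset.sum_ite_eq' Finset.univ ℓ, Finset.sum_ite, Finset.sum_const, Finset.sum_const]
  simp [aux_card_lt ℓ]

/-- Highest weight vector in `W_n^α(m,J)` for `α` supported at a single index `ℓ`
with `α_ℓ = c ≠ 0` and `J = {1,…,ℓ−1}`: the vector
`v = x₁^{-1}⋯x_{ℓ−1}^{-1} x_ℓ^{m+ℓ−1}` (in 0-based indexing, exponent
`m + ℓ` at position `ℓ`) satisfies `E_{ab}·v ∈ L_n^α(m,ℓ−2)` for `a < b`,
`E_{aa}·v = λ_a v` with `λ = (−1,…,−1, m+ℓ−1+c, 0,…,0)`, and `v ∉ L_n^α(m,ℓ−2)`,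
so its image in `W_n^α(m,J)` is a highest weight vector of weight `λ`. -/
theorem stmt_17 (n : ℕ) (ℓ : Fin n) (c : ℂ) (hc : c ≠ 0)
    (hre : 0 ≤ c.re ∧ c.re < 1)
    (α : Fin n → ℂ) (hαdef : α = fun i => if i = ℓ then c else 0)
    (m : ℤ)
    (k : Fin n → ℤ)
    (hkdef : k = fun i => if i < ℓ then (-1 : ℤ) else if i = ℓ then m + (ℓ : ℕ) else 0) :
    (∀ a b : Fin n, a < b →
      Eab α a b (Finsupp.single k (1 : ℂ)) ∈ LmodJ α m ((ℓ : ℕ) - 1 : ℤ)) ∧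
    (∀ a : Fin n,
      Eab α a a (Finsupp.single k (1 : ℂ)) =
        (if a < ℓ then (-1 : ℂ) else if a = ℓ then ((m : ℂ) + (ℓ : ℕ) + c) else 0) •
          Finsupp.single k (1 : ℂ)) ∧
    Finsupp.single k (1 : ℂ) ∉ LmodJ α m ((ℓ : ℕ) - 1 : ℤ) := by
  classical
  have hα0 : ∀ i : Fin n, α i = 0 ↔ i ≠ ℓ := by
    intro i
    subst hαdef
    by_cases h : i = ℓ <;> simp [h, hc]
  have hk : ∀ i : Fin n,
      k i = (if i < ℓ then (-1 : ℤ) else if i = ℓ then m + (ℓ : ℕ) else 0) := by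
    intro i; rw [hkdef]
  have hsumk : (∑ i, k i) = m := by rw [hkdef]; exact aux_sum_k ℓ m
  refine ⟨?_, ?_, ?_⟩
  · -- off-diagonal
    intro a b hab
    rw [eab_single]
    rcases lt_or_ge ℓ b with hbℓ | hbℓ
    · -- ℓ < b: coefficient is 0
      have h1 : ¬ b < ℓ := not_lt.mpr hbℓ.le
      have h2 : b ≠ ℓ := hbℓ.ne'
      have hz : ((k b : ℂ) + α b) = 0 := by
        rw [hk b, hαdef]; simp [h1, h2]
      rw [hz, zero_smul]
      exact Submodule.zero_mem _
    · -- b ≤ ℓ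
      have ha : a < ℓ := lt_of_lt_of_le hab hbℓ
      have hab' : a ≠ b := hab.ne
      set k' : Fin n → ℤ :=
        fun i => k i + (if i = a then 1 else 0) - (if i = b then 1 else 0) with hk'
      apply Submodule.smul_mem
      apply Submodule.subset_span
      refine ⟨k', rfl, ?_, ?_⟩
      · rw [hk']
        rw [Finset.sum_sub_distrib, Finset.sum_add_distrib]
        rw [Finset.sum_ite_eq' Finset.univ a, Finset.sum_ite_eq' Finset.univ b]
        simp [hsumk]
      · have hset : (Finset.univ.filter (fun i => α i = 0 ∧ k' i < 0))
            = (Finset.univ.filter (fun i : Fin n => i < ℓ)).erase a := by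
          ext i
          simp only [Finset.mem_filter, Finset.mem_univ, true_and, Finset.mem_erase, hα0 i]
          constructor
          · rintro ⟨hneℓ, hlt⟩
            constructor
            · rintro rfl
              have : k' i = 0 := by
                simp [hk', hk i, hab', ha]
              omega
            · by_contra h
              have hnl : ¬ i < ℓ := h
              have hℓi : ℓ < i := lt_of_le_of_ne (not_lt.mp hnl) (Ne.symm hneℓ)
              have hib : i ≠ b := by
                rintro rfl
                exact absurd hbℓ (not_le.mpr hℓi)
              have hia : i ≠ a := by
                rintro rfl
                exact absurd (ha.trans hℓi) (lt_irrefl _)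
              have : k' i = 0 := by
                simp [hk', hk i, hnl, hneℓ, hib, hia]
              omega
          · rintro ⟨hia, hiℓ⟩
            refine ⟨hiℓ.ne, ?_⟩
            by_cases hib : i = b
            · subst hib; simp [hk', hk i, hia, hiℓ]
            · simp [hk', hk i, hia, hib, hiℓ]
        rw [hset, Finset.card_erase_of_mem, aux_card_lt ℓ]
        · have h1 : (a : ℕ) < (ℓ : ℕ) := ha
          omega
        · simp [ha]
  · -- diagonal
    intro a
    rw [eab_single]
    have h1 : (fun i => k i + (if i = a then (1:ℤ) else 0) - (if i = a then 1 else 0)) = k := by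
      funext i; ring
    rw [h1]
    congr 1
    rw [hk a, hαdef]
    rcases lt_trichotomy a ℓ with h|h|h
    · simp [h, h.ne]
    · subst h; simp [lt_irrefl]
    · simp [h.ne', not_lt.mpr h.le]
  · -- non-membership
    intro hmem
    have hle : LmodJ α m ((ℓ : ℕ) - 1 : ℤ) ≤
        LinearMap.ker (Finsupp.lapply (M := ℂ) (R := ℂ) k) := by
      rw [LmodJ, Submodule.span_le]
      rintro f ⟨k', rfl, hsum, hcard⟩
      simp only [SetLike.mem_coe, LinearMap.mem_ker, Finsupp.lapply_apply]
      have hne : k' ≠ k := by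
        rintro rfl
        have hset : (Finset.univ.filter (fun i => α i = 0 ∧ k' i < 0))
            = Finset.univ.filter (fun i : Fin n => i < ℓ) := by
          ext i
          simp only [Finset.mem_filter, Finset.mem_univ, true_and, hα0 i, hk i]
          constructor
          · rintro ⟨hne, hlt⟩
            by_cases h : i < ℓ
            · exact h
            · simp [h, hne] at hlt
          · intro h
            exact ⟨h.ne, by simp [h]⟩
        rw [hset, aux_card_lt ℓ] at hcard
        omega
      simp [Finsupp.single_apply, hne]
    have := hle hmem
    simp [Finsupp.lapply_apply] at this
end

section
/- For α = 0, 1 ≤ ℓ ≤ n, J = {1,...,ℓ}, and m ∈ Z with m+ℓ−1 < 0, the vector v = x_1^{-1}···x_{ℓ−1}^{-1} x_ℓ^{m+ℓ−1} satisfies E_{ab}·v ∈ L_n^0(m,ℓ−1) for all a < b, and E_{aa}·v = λ_a v with λ = (−1,...,−1, m+ℓ−1, 0,...,0) (−1 in the first ℓ−1 coordinates). In particular, for ℓ = n and m ≤ −n, the weight λ = (−1,...,−1, m+n−1) is integral dominant (weakly decreasing integers). -/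
open Finsupp

/-- For `α = 0`, `J = {1,…,ℓ}` and `m + ℓ − 1 < 0` (0-based: `m + ℓ < 0`
for `ℓ : Fin n` 0-based, i.e. `m + ℓ.val < 0`), the vector
`v = x₁^{-1}⋯x_{ℓ−1}^{-1} x_ℓ^{m+ℓ−1}` satisfies `E_{ab}·v ∈ L_n^0(m,ℓ−1)`
for `a < b` and `E_{aa}·v = λ_a v` with `λ = (−1,…,−1, m+ℓ−1, 0,…,0)`;
moreover for `ℓ = n` and `m ≤ −n` the weight `λ` is a weakly decreasing
sequence of integers (integral dominant). -/
theorem stmt_18 (n : ℕ) (ℓ : Fin n) (m : ℤ) (hneg : m + (ℓ : ℕ) < 0)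
    (k : Fin n → ℤ)
    (hkdef : k = fun i => if i < ℓ then (-1 : ℤ) else if i = ℓ then m + (ℓ : ℕ) else 0)
    (lam : Fin n → ℤ)
    (hlam : lam = fun a => if a < ℓ then (-1 : ℤ) else if a = ℓ then m + (ℓ : ℕ) else 0) :
    (∀ a b : Fin n, a < b →
      Eab (0 : Fin n → ℂ) a b (Finsupp.single k (1 : ℂ)) ∈
        LmodJ (0 : Fin n → ℂ) m ((ℓ : ℕ) : ℤ)) ∧
    (∀ a : Fin n,
      Eab (0 : Fin n → ℂ) a a (Finsupp.single k (1 : ℂ)) =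
        ((lam a : ℂ)) • Finsupp.single k (1 : ℂ)) ∧
    ((ℓ : ℕ) = n - 1 → m ≤ -(n : ℤ) →
      ∀ i j : Fin n, i ≤ j → lam j ≤ lam i) := by
  have hkℓ : k ℓ = m + (ℓ : ℕ) := by simp [hkdef]
  have hklt : ∀ i, i < ℓ → k i = -1 := by intro i h; simp [hkdef, h]
  have hkgt : ∀ i, ℓ < i → k i = 0 := by
    intro i h; simp [hkdef, (lt_asymm h), h.ne']
  have hkneg : ∀ i, k i < 0 → i ≤ ℓ := by
    intro i hi
    by_contra h
    push_neg at h
    rw [hkgt i h] at hi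
    omega
  have hsum : ∑ i, k i = m := by
    have hfun : ∀ i, k i = (if i = ℓ then m + (ℓ : ℕ) else 0) + (if i < ℓ then -1 else 0) := by
      intro i
      rcases lt_trichotomy i ℓ with h | h | h
      · simp [hklt i h, h, h.ne]
      · subst h; simp [hkℓ]
      · simp [hkgt i h, (lt_asymm h), h.ne']
    rw [Finset.sum_congr rfl (fun i _ => hfun i), Finset.sum_add_distrib,
      Finset.sum_ite_eq' Finset.univ ℓ]
    rw [← Finset.sum_filter]
    have : Finset.univ.filter (fun i : Fin n => i < ℓ) = Finset.Iio ℓ := by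
      ext i; simp
    rw [this, Finset.sum_const, Fin.card_Iio]
    simp
  have hE : ∀ a b : Fin n, Eab (0 : Fin n → ℂ) a b (Finsupp.single k 1)
      = ((k b : ℂ)) • Finsupp.single
        (fun i => k i + (if i = a then 1 else 0) - (if i = b then 1 else 0)) (1 : ℂ) := by
    intro a b
    rw [Eab, Finsupp.lsum_single]
    simp
  refine ⟨?_, ?_, ?_⟩
  · intro a b hab
    rw [hE a b]
    by_cases hb : k b = 0
    · rw [hb]; simp
    · have hble : b ≤ ℓ := by
        by_contra h
        push_neg at h
        exact hb (hkgt b h)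
      have halt : a < ℓ := lt_of_lt_of_le hab hble
      apply Submodule.smul_mem
      apply Submodule.subset_span
      refine ⟨_, rfl, ?_, ?_⟩
      · rw [Finset.sum_sub_distrib, Finset.sum_add_distrib,
          Finset.sum_ite_eq' Finset.univ a, Finset.sum_ite_eq' Finset.univ b, hsum]
        simp
      · have hsub : (Finset.univ.filter (fun i : Fin n => (0 : Fin n → ℂ) i = 0 ∧
            (k i + (if i = a then 1 else 0) - (if i = b then 1 else 0)) < 0))
            ⊆ (Finset.Iic ℓ).erase a := by
          intro i hi
          simp only [Finset.mem_filter, Finset.mem_univ, Pi.zero_apply, true_and] at hi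
          have hia : i ≠ a := by
            intro h
            subst h
            rw [hklt i halt, if_pos rfl, if_neg hab.ne] at hi
            omega
          rw [Finset.mem_erase, Finset.mem_Iic]
          refine ⟨hia, ?_⟩
          by_cases hib : i = b
          · subst hib; exact hble
          · rw [if_neg hia, if_neg hib] at hi
            exact hkneg i (by omega)
        have hcard := Finset.card_le_card hsub
        have h2 : ((Finset.Iic ℓ).erase a).card = (ℓ : ℕ) := by
          rw [Finset.card_erase_of_mem (Finset.mem_Iic.2 halt.le), Fin.card_Iic]
          omega
        omega
  · intro a
    have hk' : (fun i => k i + (if i = a then 1 else 0) - (if i = a then 1 else 0)) = k := by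
      funext i; ring
    have hla : (lam a : ℂ) = (k a : ℂ) := by rw [hlam, hkdef]
    rw [hE a a, hk', hla]
  · intro hl hm i j hij
    have hjle : j ≤ ℓ := by
      rw [Fin.le_def]
      rw [hl]
      omega
    subst hlam
    simp only
    have hml : m + (ℓ : ℕ) ≤ -1 := by omega
    rcases lt_or_eq_of_le hjle with hj | hj
    · rw [if_pos hj, if_pos (lt_of_le_of_lt hij hj)]
    · subst hj
      rw [if_neg (lt_irrefl _), if_pos rfl]
      rcases lt_or_eq_of_le hij with hi | hi
      · rw [if_pos hi]; omega
      · subst hi; rw [if_neg (lt_irrefl _), if_pos rfl]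
end

section
/- For m ∈ Z, 1 ≤ j ≤ |I_α|, and distinct subsets J_1, J_2 ⊆ I_α with |J_1| = |J_2| = j, the intersection of the images W_n^α(m,J_1) ∩ W_n^α(m,J_2) inside the quotient L_n^α(m,j)/L_n^α(m,j−1) is zero; consequently L_n^α(m,j)/L_n^α(m,j−1) = ⊕_{J ⊆ I_α, |J|=j} W_n^α(m,J). -/
open Finsupp

/- ## Auxiliary material -/

open scoped Classical in
noncomputable def filterLM {n : ℕ} (p : (Fin n → ℤ) → Prop) : Lmon n →ₗ[ℂ] Lmon n where
  toFun := Finsupp.filter p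
  map_add' _ _ := Finsupp.filter_add
  map_smul' _ _ := Finsupp.filter_smul

open scoped Classical in
lemma ker_filterLM {n : ℕ} (p : (Fin n → ℤ) → Prop) :
    LinearMap.ker (filterLM p) = Finsupp.supported ℂ ℂ {k | ¬ p k} := by
  ext f
  simp only [LinearMap.mem_ker, filterLM, LinearMap.coe_mk, AddHom.coe_mk,
    Finsupp.mem_supported', Finsupp.filter_eq_zero_iff, Set.mem_setOf_eq, not_not]

open scoped Classical in
lemma map_filterLM_supported {n : ℕ} (p : (Fin n → ℤ) → Prop) (A : Set (Fin n → ℤ)) :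
    (Finsupp.supported ℂ ℂ A).map (filterLM p) =
      Finsupp.supported ℂ ℂ (A ∩ {k | p k}) := by
  apply le_antisymm
  · rintro _ ⟨f, hf, rfl⟩
    rw [SetLike.mem_coe, Finsupp.mem_supported] at hf
    rw [Finsupp.mem_supported]
    intro x hx
    rw [Finset.mem_coe] at hx
    have hx' : x ∈ f.support.filter p := by
      simpa [filterLM, Finsupp.support_filter, Finset.filter_congr_decidable] using hx
    rw [Finset.mem_filter] at hx'
    exact ⟨hf hx'.1, hx'.2⟩
  · intro f hf
    rw [Finsupp.mem_supported] at hf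
    refine ⟨f, ?_, ?_⟩
    · rw [SetLike.mem_coe, Finsupp.mem_supported]
      exact hf.trans (fun x hx => hx.1)
    · show Finsupp.filter p f = f
      rw [Finsupp.filter_eq_self_iff]
      intro x hx
      have : x ∈ f.support := Finsupp.mem_support_iff.mpr hx
      exact (hf this).2

open scoped Classical in
lemma span_monomials {n : ℕ} (S : Set (Fin n → ℤ)) :
    Submodule.span ℂ {f : Lmon n | ∃ k, f = Finsupp.single k (1 : ℂ) ∧ k ∈ S} =
      Finsupp.supported ℂ ℂ S := by
  rw [Finsupp.supported_eq_span_single]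
  congr 1
  ext f
  simp only [Set.mem_setOf_eq, Set.mem_image]
  constructor
  · rintro ⟨k, rfl, hk⟩; exact ⟨k, hk, rfl⟩
  · rintro ⟨k, hk, rfl⟩; exact ⟨k, rfl, hk⟩

open scoped Classical in
noncomputable def SkF {n : ℕ} (α : Fin n → ℂ) (k : Fin n → ℤ) : Finset (Fin n) :=
  Finset.univ.filter fun ℓ => α ℓ = 0 ∧ k ℓ < 0

noncomputable def sLset {n : ℕ} (α : Fin n → ℂ) (m t : ℤ) : Set (Fin n → ℤ) :=
  {k | (∑ i, k i) = m ∧ ((SkF α k).card : ℤ) ≤ t}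

noncomputable def SVset {n : ℕ} (α : Fin n → ℂ) (m : ℤ) (J : Finset (Fin n)) :
    Set (Fin n → ℤ) :=
  {k | (∑ i, k i) = m ∧ ∀ ℓ, α ℓ = 0 → k ℓ < 0 → ℓ ∈ J}

noncomputable def Aset {n : ℕ} (α : Fin n → ℂ) (m : ℤ) (J : Finset (Fin n)) :
    Set (Fin n → ℤ) :=
  {k | (∑ i, k i) = m ∧ SkF α k = J}

lemma LmodJ_eq_supported {n : ℕ} (α : Fin n → ℂ) (m t : ℤ) :
    LmodJ α m t = Finsupp.supported ℂ ℂ (sLset α m t) := by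
  rw [← span_monomials]
  rfl

lemma Vmod_eq_supported {n : ℕ} (α : Fin n → ℂ) (m : ℤ) (J : Finset (Fin n)) :
    Vmod α m J = Finsupp.supported ℂ ℂ (SVset α m J) := by
  rw [← span_monomials]
  rfl

lemma mem_SkF {n : ℕ} (α : Fin n → ℂ) (k : Fin n → ℤ) (ℓ : Fin n) :
    ℓ ∈ SkF α k ↔ α ℓ = 0 ∧ k ℓ < 0 := by
  classical
  simp [SkF, Finset.mem_filter]

lemma SV_inter_eq {n : ℕ} (α : Fin n → ℂ) (m : ℤ) (j : ℕ) (J : Finset (Fin n))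
    (hJ : J.card = j) :
    SVset α m J ∩ {k | k ∉ sLset α m ((j : ℤ) - 1)} = Aset α m J := by
  ext k
  simp only [SVset, sLset, Aset, Set.mem_inter_iff, Set.mem_setOf_eq]
  constructor
  · rintro ⟨⟨hd, hsub⟩, hp⟩
    refine ⟨hd, ?_⟩
    have hsub' : SkF α k ⊆ J := by
      intro ℓ hℓ
      rw [mem_SkF] at hℓ
      exact hsub ℓ hℓ.1 hℓ.2
    have hcard : ¬ ((SkF α k).card : ℤ) ≤ (j : ℤ) - 1 := fun h => hp ⟨hd, h⟩
    have : J.card ≤ (SkF α k).card := by omega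
    exact (Finset.eq_of_subset_of_card_le hsub' this)
  · rintro ⟨hd, hSk⟩
    refine ⟨⟨hd, fun ℓ h0 hneg => ?_⟩, ?_⟩
    · rw [← hSk, mem_SkF]; exact ⟨h0, hneg⟩
    · rintro ⟨-, hle⟩
      rw [hSk] at hle
      omega

lemma B_inter_eq {n : ℕ} (α : Fin n → ℂ) (m : ℤ) (j : ℕ) :
    sLset α m (j : ℤ) ∩ {k | k ∉ sLset α m ((j : ℤ) - 1)} =
      {k | (∑ i, k i) = m ∧ (SkF α k).card = j} := by
  ext k
  simp only [sLset, Set.mem_inter_iff, Set.mem_setOf_eq]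
  constructor
  · rintro ⟨⟨hd, hle⟩, hp⟩
    have : ¬ ((SkF α k).card : ℤ) ≤ (j : ℤ) - 1 := fun h => hp ⟨hd, h⟩
    exact ⟨hd, by omega⟩
  · rintro ⟨hd, hc⟩
    exact ⟨⟨hd, by omega⟩, by rintro ⟨-, hle⟩; omega⟩

lemma A_union_eq {n : ℕ} (α : Fin n → ℂ) (m : ℤ) (j : ℕ) :
    (⋃ (J : {J : Finset (Fin n) // (∀ ℓ ∈ J, α ℓ = 0) ∧ J.card = j}), Aset α m J.val) =
      {k | (∑ i, k i) = m ∧ (SkF α k).card = j} := by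
  ext k
  simp only [Set.mem_iUnion, Aset, Set.mem_setOf_eq]
  constructor
  · rintro ⟨J, hd, hSk⟩
    exact ⟨hd, by rw [hSk]; exact J.2.2⟩
  · rintro ⟨hd, hc⟩
    exact ⟨⟨SkF α k, fun ℓ hℓ => ((mem_SkF α k ℓ).mp hℓ).1, hc⟩, hd, rfl⟩

lemma A_disjoint {n : ℕ} (α : Fin n → ℂ) (m : ℤ) {J₁ J₂ : Finset (Fin n)}
    (hne : J₁ ≠ J₂) : Disjoint (Aset α m J₁) (Aset α m J₂) := by
  rw [Set.disjoint_left]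
  rintro k ⟨-, h1⟩ ⟨-, h2⟩
  exact hne (h1 ▸ h2)

open scoped Classical in

open scoped Classical in
/-- For `1 ≤ j ≤ |I_α|` the images `W_n^α(m,J)` of the `V_n^α(m,J)` in the
quotient `L_n^α(m,j)/L_n^α(m,j−1)` (for `J ⊆ I_α`, `|J| = j`) intersect
pairwise trivially, are independent, and their sum is the whole quotient:
`L_n^α(m,j)/L_n^α(m,j−1) = ⊕_{J ⊆ I_α, |J|=j} W_n^α(m,J)`. -/
theorem stmt_19 (n : ℕ) (α : Fin n → ℂ)
    (hα : ∀ ℓ, 0 ≤ (α ℓ).re ∧ (α ℓ).re < 1)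
    (m : ℤ) (j : ℕ) (hj1 : 1 ≤ j)
    (hj2 : j ≤ (Finset.univ.filter (fun ℓ : Fin n => α ℓ = 0)).card)
    (W : Finset (Fin n) → Submodule ℂ (Lmon n ⧸ LmodJ α m ((j : ℤ) - 1)))
    (hW : ∀ J, W J = (Vmod α m J).map (LmodJ α m ((j : ℤ) - 1)).mkQ) :
    (∀ J₁ J₂ : Finset (Fin n),
      (∀ ℓ ∈ J₁, α ℓ = 0) → J₁.card = j →
      (∀ ℓ ∈ J₂, α ℓ = 0) → J₂.card = j →
      J₁ ≠ J₂ → W J₁ ⊓ W J₂ = ⊥) ∧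
    ((LmodJ α m j).map (LmodJ α m ((j : ℤ) - 1)).mkQ =
      ⨆ J ∈ {J : Finset (Fin n) | (∀ ℓ ∈ J, α ℓ = 0) ∧ J.card = j}, W J) ∧
    iSupIndep (fun J : {J : Finset (Fin n) // (∀ ℓ ∈ J, α ℓ = 0) ∧ J.card = j} =>
      W J.val) := by
  classical
  have hker : LinearMap.ker (filterLM (n := n) (fun k => k ∉ sLset α m ((j : ℤ) - 1))) =
      LmodJ α m ((j : ℤ) - 1) := by
    rw [ker_filterLM, LmodJ_eq_supported]
    congr 1
    ext k
    simp
  set πb : (Lmon n ⧸ LmodJ α m ((j : ℤ) - 1)) →ₗ[ℂ] Lmon n :=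
    (LmodJ α m ((j : ℤ) - 1)).liftQ
      (filterLM (fun k => k ∉ sLset α m ((j : ℤ) - 1))) hker.ge with hπb
  have hinj : Function.Injective πb :=
    LinearMap.ker_eq_bot.mp (Submodule.ker_liftQ_eq_bot _ _ _ hker.le)
  have hmap : ∀ V : Submodule ℂ (Lmon n),
      (V.map (LmodJ α m ((j : ℤ) - 1)).mkQ).map πb =
        V.map (filterLM (fun k => k ∉ sLset α m ((j : ℤ) - 1))) := by
    intro V
    rw [hπb, ← Submodule.map_comp, Submodule.liftQ_mkQ]
  have hWmap : ∀ J : Finset (Fin n), J.card = j →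
      (W J).map πb = Finsupp.supported ℂ ℂ (Aset α m J) := by
    intro J hJ
    rw [hW J, hmap, Vmod_eq_supported, map_filterLM_supported,
      ← SV_inter_eq α m j J hJ]
  refine ⟨?_, ?_, ?_⟩
  · intro J₁ J₂ _ h1c _ h2c hne
    apply Submodule.map_injective_of_injective hinj
    rw [Submodule.map_inf _ hinj, Submodule.map_bot, hWmap J₁ h1c, hWmap J₂ h2c]
    exact _root_.disjoint_iff.mp
      (Finsupp.disjoint_supported_supported (A_disjoint α m hne))
  · apply Submodule.map_injective_of_injective hinj
    rw [hmap, LmodJ_eq_supported, map_filterLM_supported, B_inter_eq]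
    simp only [Submodule.map_iSup]
    apply le_antisymm
    · rw [← A_union_eq α m j, Finsupp.supported_iUnion]
      refine iSup_le fun J => ?_
      have h1 : Finsupp.supported ℂ ℂ (Aset α m J.val) = (W J.val).map πb :=
        (hWmap J.val J.2.2).symm
      rw [h1]
      exact le_iSup₂ (f := fun J' (_ : J' ∈ {J : Finset (Fin n) |
        (∀ ℓ ∈ J, α ℓ = 0) ∧ J.card = j}) => (W J').map πb) J.val J.2
    · refine iSup₂_le fun J hJ => ?_
      rw [hWmap J hJ.2]
      apply Finsupp.supported_mono
      rintro k ⟨hd, hSk⟩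
      exact ⟨hd, by rw [hSk]; exact hJ.2⟩
  · rw [iSupIndep_def]
    intro i
    have key : Disjoint ((W i.val).map πb)
        ((⨆ (j') (_ : j' ≠ i), W (j' : {J : Finset (Fin n) //
          (∀ ℓ ∈ J, α ℓ = 0) ∧ J.card = j}).val).map πb) := by
      rw [hWmap i.val i.2.2]
      refine Disjoint.mono_right ?_ (Finsupp.disjoint_supported_supported
        (s := Aset α m i.val)
        (t := ⋃ (j' : {x : {J : Finset (Fin n) // (∀ ℓ ∈ J, α ℓ = 0) ∧ J.card = j} // x ≠ i}),
          Aset α m j'.val.val) ?_)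
      · simp only [Submodule.map_iSup]
        refine iSup₂_le fun j' hne => ?_
        rw [hWmap j'.val j'.2.2]
        exact Finsupp.supported_mono (Set.subset_iUnion
          (fun (x : {x // x ≠ i}) => Aset α m x.val.val) ⟨j', hne⟩)
      · rw [Set.disjoint_left]
        rintro k ⟨-, h1⟩ hk
        rw [Set.mem_iUnion] at hk
        obtain ⟨j', -, h2⟩ := hk
        exact j'.2 (Subtype.ext (h2 ▸ h1 ▸ rfl))
    rw [_root_.disjoint_iff] at key ⊢
    apply Submodule.map_injective_of_injective hinj
    rw [Submodule.map_inf _ hinj, Submodule.map_bot]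
    exact key
end
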